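/- Let (φ, X) be an instance of Paired SAT with X = {(x_1,y_1),…,(x_n,y_n)} and φ a 3-CNF over these variables, and let H be the hypergraph associated to (φ, X) by the gadget construction. If Falsifier has a winning strategy in the Paired SAT game on (φ, X), then Client has a winning strategy in the Client-Waiter game on H. -/

import Mathlib

variable {α : Type*} [DecidableEq α]

lemma card_sdiff_pair_lt {U : Finset α} {x y : α} (hx : x ∈ U) :
    (U \ {x, y}).card < U.card :=
  lt_of_le_of_lt
    (Finset.card_le_card (by
      intro a ha
      simp only [Finset.mem_sdiff, Finset.mem_insert, Finset.mem_singleton,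
        Finset.mem_erase] at ha ⊢
      tauto))
    (Finset.card_erase_lt_of_mem hx)

/-- Client-Waiter game played on the edge set `E`: Client has a winning strategy from the
position in which `U` is the set of unclaimed vertices and `C` is the set of vertices already
claimed by Client.  While at least two vertices are unclaimed, Waiter offers two distinct
unclaimed vertices `x, y`; Client claims one of them and Waiter gets the other.  A last
remaining unclaimed vertex goes to Client.  Client wins if at the end his vertices contain an
edge of `E`. -/
def CWClientWins (E : Set (Finset α)) (U C : Finset α) : Prop :=
  if _h : 2 ≤ U.card then
    ∀ x ∈ U, ∀ y ∈ U, x ≠ y →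
      CWClientWins E (U \ {x, y}) (insert x C) ∨ CWClientWins E (U \ {x, y}) (insert y C)
  else ∃ e ∈ E, e ⊆ C ∪ U
termination_by U.card
decreasing_by all_goals exact card_sdiff_pair_lt (by assumption)

/-- A literal over the variable type `ν`: a variable together with a polarity. -/
abbrev Lit (ν : Type*) := ν × Bool

/-- A clause with exactly three literals. -/
abbrev Clause3 (ν : Type*) := Lit ν × Lit ν × Lit ν

/-- A 3-CNF formula: a list of three-literal clauses. -/
abbrev CNF3 (ν : Type*) := List (Clause3 ν)

def evalLit {ν : Type*} (v : ν → Bool) (l : Lit ν) : Prop := v l.1 = l.2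

def evalClause {ν : Type*} (v : ν → Bool) (c : Clause3 ν) : Prop :=
  evalLit v c.1 ∨ evalLit v c.2.1 ∨ evalLit v c.2.2

def evalCNF {ν : Type*} (v : ν → Bool) (φ : CNF3 ν) : Prop := ∀ c ∈ φ, evalClause v c

/-- Paired SAT game on the pair-index type `I` with winning condition `φ` for Satisfier:
Falsifier has a winning strategy from the position in which `R` is the set of indices not yet
chosen and `x, y` record the values assigned so far.  At each turn Satisfier picks an unchosen
index `i` and a value for `x i`, then Falsifier picks a value for `y i`; when all indices are
exhausted Falsifier wins iff `φ x y` fails. -/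
def PSFalsWins {I : Type*} [DecidableEq I] (φ : (I → Bool) → (I → Bool) → Prop)
    (R : Finset I) (x y : I → Bool) : Prop :=
  if _h : R.Nonempty then
    ∀ i ∈ R, ∀ b : Bool,
      PSFalsWins φ (R.erase i) (Function.update x i b) (Function.update y i true) ∨
      PSFalsWins φ (R.erase i) (Function.update x i b) (Function.update y i false)
  else ¬ φ x y
termination_by R.card
decreasing_by all_goals exact Finset.card_erase_lt_of_mem (by assumption)

/-- Vertices of the gadget hypergraph: for `i : Fin n`,
`(i, 0) = sᵢ⁰`, `(i, 1) = sᵢᵀ`, `(i, 2) = sᵢᶠ`, `(i, 3) = sᵢ¹`,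
`(i, 4) = fᵢ⁰`, `(i, 5) = fᵢᵀ`, `(i, 6) = fᵢᵀ'`, `(i, 7) = fᵢᶠ`. -/
abbrev GVert (n : ℕ) := Fin n × Fin 8

def vs0 {n : ℕ} (i : Fin n) : GVert n := (i, 0)
def vsT {n : ℕ} (i : Fin n) : GVert n := (i, 1)
def vsF {n : ℕ} (i : Fin n) : GVert n := (i, 2)
def vs1 {n : ℕ} (i : Fin n) : GVert n := (i, 3)
def vf0 {n : ℕ} (i : Fin n) : GVert n := (i, 4)
def vfT {n : ℕ} (i : Fin n) : GVert n := (i, 5)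
def vfT' {n : ℕ} (i : Fin n) : GVert n := (i, 6)
def vfF {n : ℕ} (i : Fin n) : GVert n := (i, 7)

def SBlock {n : ℕ} (i : Fin n) : Finset (GVert n) := {vs0 i, vsT i, vsF i, vs1 i}
def FBlock {n : ℕ} (i : Fin n) : Finset (GVert n) := {vf0 i, vfT i, vfT' i, vfF i}

/-- The block edges: all 3-element subsets of each `Sᵢ` and of each `Fᵢ`. -/
def blockEdges (n : ℕ) : Set (Finset (GVert n)) :=
  {e | ∃ i : Fin n, e.card = 3 ∧ (e ⊆ SBlock i ∨ e ⊆ FBlock i)}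

/-- The pair edges `Pᵢ`. -/
def pairEdges (n : ℕ) : Set (Finset (GVert n)) :=
  {e | ∃ i : Fin n,
    e = {vs0 i, vsT i, vf0 i, vfT i} ∨ e = {vs0 i, vfF i, vfT i, vsF i} ∨
    e = {vs0 i, vfF i, vsT i, vfT' i} ∨ e = {vs0 i, vsF i, vf0 i, vfT' i}}

/-- `litSets ℓ` is the family `H_j^k` encoding that the literal `ℓ` is falsified;
`Sum.inl i` is the variable `xᵢ` and `Sum.inr i` is the variable `yᵢ`. -/
def litSets {n : ℕ} : Lit (Fin n ⊕ Fin n) → Set (Finset (GVert n))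
  | (Sum.inl i, true) => {{vs0 i, vsT i}}
  | (Sum.inl i, false) => {{vs0 i, vsF i}}
  | (Sum.inr i, true) => {{vf0 i, vfT i}, {vf0 i, vfT' i}}
  | (Sum.inr i, false) => {{vfF i}}

/-- The clause edges: for each clause `c` of `φ`, all unions `h₁ ∪ h₂ ∪ h₃` with
`h_k ∈ litSets (ℓ_k)`. -/
def clauseEdges (n : ℕ) (φ : CNF3 (Fin n ⊕ Fin n)) : Set (Finset (GVert n)) :=
  {e | ∃ c ∈ φ, ∃ h1 ∈ litSets c.1, ∃ h2 ∈ litSets c.2.1, ∃ h3 ∈ litSets c.2.2,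
    e = h1 ∪ h2 ∪ h3}

/-- All edges of the gadget hypergraph associated to the Paired SAT instance `(φ, X)`. -/
def gadgetEdges (n : ℕ) (φ : CNF3 (Fin n ⊕ Fin n)) : Set (Finset (GVert n)) :=
  blockEdges n ∪ pairEdges n ∪ clauseEdges n φ

/-!
Client simulates the Paired SAT game, playing Satisfier himself against Falsifier's winning
strategy. Waiter has to offer pairs inside one half `Sᵢ` or `Fᵢ` of a gadget, since an offer
leaving a half uneven gives Client three of its vertices. At Waiter's first offer in gadget `i`
Client fixes, as Satisfier, the value of `xᵢ`, Falsifier answers with `yᵢ`, and Client claims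
his vertices of the gadget so that they contain a set of `H_j^k` for each literal falsified by
these values.
If Waiter starts in `Fᵢ`, Client chooses the value of `xᵢ` himself and claims a pair of `Fᵢ`
that completes an edge of `Pᵢ` with the `S`-pair encoding the other value; if Waiter later
forces that other pair on him, Client wins through `Pᵢ`. The final simulated assignment
falsifies a clause, whose edge in `Cl` Client then owns.
-/

namespace CWClientWins

variable {E : Set (Finset α)}

def Answers (E : Set (Finset α)) (U C : Finset α) (x y : α) : Prop :=
  CWClientWins E (U \ {x, y}) (insert x C) ∨ CWClientWins E (U \ {x, y}) (insert y C)

theorem Answers.of_take {U C : Finset α} {x y v : α} (hv : v = x ∨ v = y)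
    (h : CWClientWins E (U \ {x, y}) (insert v C)) : Answers E U C x y := by
  rcases hv with rfl | rfl
  exacts [.inl h, .inr h]

theorem of_subset {U C e : Finset α} (he : e ∈ E) (hC : e ⊆ C) : CWClientWins E U C := by
  rw [CWClientWins]
  split_ifs
  · exact fun x hx y _ _ => .inl (of_subset he (hC.trans (Finset.subset_insert _ _)))
  · exact ⟨e, he, hC.trans Finset.subset_union_left⟩
termination_by U.card
decreasing_by exact card_sdiff_pair_lt hx

/-- Client claims `v` as soon as it is offered, or as the last vertex. -/
theorem of_subset_insert {U C e : Finset α} {v : α} (he : e ∈ E) (hv : v ∈ U)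
    (hC : e ⊆ insert v C) : CWClientWins E U C := by
  rw [CWClientWins]
  split_ifs
  · intro x hx y hy hxy
    by_cases hvxy : v = x ∨ v = y
    · exact Answers.of_take hvxy (of_subset he hC)
    refine .inl (of_subset_insert he (v := v) (by grind) (hC.trans ?_))
    exact Finset.insert_subset_insert _ (Finset.subset_insert _ _)
  · exact ⟨e, he, hC.trans (Finset.insert_subset (by simp [hv]) Finset.subset_union_left)⟩
termination_by U.card
decreasing_by exact card_sdiff_pair_lt hx

/-- Two threats missing `{a, b}` and `{b, c}`: as soon as one of `a, b, c` is offered, Client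
claims it (preferring `b`) and keeps a threat missing a single vertex. -/
theorem of_path {U C e₁ e₂ : Finset α} {a b c : α} (he₁ : e₁ ∈ E) (he₂ : e₂ ∈ E)
    (ha : a ∈ U) (hb : b ∈ U) (hc : c ∈ U) (hab : a ≠ b) (hbc : b ≠ c) (hac : a ≠ c)
    (h₁ : e₁ ⊆ insert a (insert b C)) (h₂ : e₂ ⊆ insert b (insert c C)) :
    CWClientWins E U C := by
  rw [CWClientWins]
  split_ifs
  · intro x hx y hy hxy
    have mem : ∀ {v}, v ∈ U → v ≠ x → v ≠ y → v ∈ U \ {x, y} := by grind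
    by_cases hbxy : b = x ∨ b = y
    · refine Answers.of_take hbxy ?_
      by_cases hay : a = x ∨ a = y
      · exact of_subset_insert he₂ (mem hc (by grind) (by grind)) (by grind)
      · exact of_subset_insert he₁ (mem ha (by grind) (by grind)) (by grind)
    by_cases haxy : a = x ∨ a = y
    · exact Answers.of_take haxy (of_subset_insert he₁ (mem hb (by grind) (by grind)) (by grind))
    by_cases hcxy : c = x ∨ c = y
    · exact Answers.of_take hcxy (of_subset_insert he₂ (mem hb (by grind) (by grind)) (by grind))
    refine .inl (of_path he₁ he₂ (mem ha (by grind) (by grind)) (mem hb (by grind) (by grind))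
      (mem hc (by grind) (by grind)) hab hbc hac (h₁.trans ?_) (h₂.trans ?_)) <;>
    exact Finset.insert_subset_insert _ (Finset.insert_subset_insert _ (Finset.subset_insert _ _))
  · exact ⟨e₁, he₁, h₁.trans (by grind)⟩
termination_by U.card
decreasing_by exact card_sdiff_pair_lt hx

end CWClientWins

section Gadget

variable {n : ℕ} {φ : CNF3 (Fin n ⊕ Fin n)}

theorem mem_SBlock {i : Fin n} {k : Fin 8} : (i, k) ∈ SBlock i ↔ k.val < 4 := by
  fin_cases k <;> simp [SBlock, vs0, vsT, vsF, vs1]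

theorem mem_FBlock {i : Fin n} {k : Fin 8} : (i, k) ∈ FBlock i ↔ 4 ≤ k.val := by
  fin_cases k <;> simp [FBlock, vf0, vfT, vfT', vfF]

theorem triple_mem_gadgetEdges {i : Fin n} {a b c : Fin 8} (hab : a ≠ b) (hac : a ≠ c)
    (hbc : b ≠ c) (hb : b.val < 4 ↔ a.val < 4) (hc : c.val < 4 ↔ a.val < 4) :
    ({(i, a), (i, b), (i, c)} : Finset (GVert n)) ∈ gadgetEdges n φ := by
  have hcard : ({(i, a), (i, b), (i, c)} : Finset (GVert n)).card = 3 :=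
    Finset.card_eq_three.mpr ⟨_, _, _, by simpa, by simpa, by simpa, rfl⟩
  refine .inl (.inl ⟨i, hcard, ?_⟩)
  by_cases ha : a.val < 4
  · left
    simp only [Finset.insert_subset_iff, Finset.singleton_subset_iff, mem_SBlock]
    tauto
  · right
    simp only [Finset.insert_subset_iff, Finset.singleton_subset_iff, mem_FBlock]
    omega

/-- Client realises the value `xv` of `xᵢ` by claiming `sᵢ⁰` and `sClaim xv`, a pair of
`H_j^k` for the literal of `xᵢ` that `xv` falsifies. -/
def sClaim (xv : Bool) : Fin 8 := if xv then 2 else 1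

def sSpare (xv : Bool) : Fin 8 := if xv then 1 else 2

/-- The pair of `Fᵢ` that encodes the value `yv` of `yᵢ` and completes `{sᵢ⁰, sSpare xv}` to
an edge of `Pᵢ`. -/
def fPlan : Bool → Bool → Fin 8 × Fin 8
  | false, false => (4, 6)
  | false, true => (5, 7)
  | true, false => (4, 5)
  | true, true => (6, 7)

def punishEdge (i : Fin n) (xv yv : Bool) : Finset (GVert n) :=
  {(i, 0), (i, sSpare xv), (i, (fPlan xv yv).1), (i, (fPlan xv yv).2)}

theorem punishEdge_mem_gadgetEdges (i : Fin n) (xv yv : Bool) :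
    punishEdge i xv yv ∈ gadgetEdges n φ := by
  refine .inl (.inr ⟨i, ?_⟩)
  cases xv <;> cases yv <;>
    simp only [punishEdge, sSpare, fPlan, Bool.false_eq_true, if_true, if_false]
  · exact .inr (.inr (.inr (by ext; simp [vs0, vsF, vf0, vfT'])))
  · exact .inr (.inl (by ext; simp [vs0, vsF, vfT, vfF]; tauto))
  · exact .inl (by ext; simp [vs0, vsT, vf0, vfT])
  · exact .inr (.inr (.inl (by ext; simp [vs0, vsT, vfT', vfF]; tauto)))

theorem punishEdge_subset {C : Finset (GVert n)} {i : Fin n} {xv yv : Bool} {σ w a b : Fin 8}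
    (hσw : σ = 0 ∧ w = sSpare xv ∨ σ = sSpare xv ∧ w = 0)
    (hab : a = (fPlan xv yv).1 ∧ b = (fPlan xv yv).2 ∨
      a = (fPlan xv yv).2 ∧ b = (fPlan xv yv).1)
    (hσ : (i, σ) ∈ C) (hw : (i, w) ∈ C) (ha : (i, a) ∈ C) (hb : (i, b) ∈ C) :
    punishEdge i xv yv ⊆ C := by
  simp only [punishEdge, Finset.insert_subset_iff, Finset.singleton_subset_iff]
  rcases hσw with ⟨rfl, rfl⟩ | ⟨rfl, rfl⟩ <;>
    rcases hab with ⟨rfl, rfl⟩ | ⟨rfl, rfl⟩ <;> exact ⟨‹_›, ‹_›, ‹_›, ‹_›⟩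

end Gadget

inductive Mark
  | client
  | waiter
  | free
  deriving DecidableEq

/-- Client's progress on the `S`-half (coordinates `0, …, 3`) of a gadget: untouched, one pair
played (`own` went to Client, `gave` to Waiter), or finished. -/
inductive SHalf
  | fresh
  | touched (own gave : Fin 8)
  | done
  deriving DecidableEq

inductive FHalf
  | fresh
  | touched (own gave : Fin 8)
  | done (own₁ own₂ : Fin 8)
  deriving DecidableEq

/-- Client's record of one gadget: `pending` while its index is unplayed in the simulated Paired
SAT game, afterwards the simulated values `xv`, `yv` of `xᵢ`, `yᵢ` and the progress on the two
halves. -/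
inductive Gadget
  | pending
  | committed (xv yv : Bool) (s : SHalf) (f : FHalf)
  deriving DecidableEq

def SHalf.mark (xv : Bool) : SHalf → Fin 8 → Mark
  | .fresh, _ => .free
  | .touched o w, k => if k = o then .client else if k = w then .waiter else .free
  | .done, k => if k = 0 ∨ k = sClaim xv then .client else .waiter

def FHalf.mark : FHalf → Fin 8 → Mark
  | .fresh, _ => .free
  | .touched o w, k => if k = o then .client else if k = w then .waiter else .free
  | .done z₁ z₂, k => if k = z₁ ∨ k = z₂ then .client else .waiter

def Gadget.mark : Gadget → Fin 8 → Mark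
  | .pending, _ => .free
  | .committed xv _ s f, k => if k.val < 4 then s.mark xv k else f.mark k

def Gadget.xVal : Gadget → Bool
  | .pending => false
  | .committed xv _ _ _ => xv

def Gadget.yVal : Gadget → Bool
  | .pending => false
  | .committed _ yv _ _ => yv

def SHalf.isFresh : SHalf → Bool
  | .fresh => true
  | _ => false

def SHalf.Ok (xv : Bool) : SHalf → Prop
  | .touched o w => (o = 0 ∨ o = sClaim xv) ∧ (w = sSpare xv ∨ w = 3)
  | _ => True

/-- Client's pair `{z₁, z₂}` in `Fᵢ` contains a set of `H_j^k` for the literal of `yᵢ` falsified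
by `yv`, and while `Sᵢ` is untouched it is the planned pair `fPlan xv yv`. -/
def FDoneOk (xv yv sFresh : Bool) (z₁ z₂ : Fin 8) : Prop :=
  4 ≤ z₁.val ∧ 4 ≤ z₂.val ∧ z₁ ≠ z₂ ∧
    (if yv then z₁ = 7 ∨ z₂ = 7
      else (z₁ = 4 ∧ (z₂ = 5 ∨ z₂ = 6)) ∨ (z₂ = 4 ∧ (z₁ = 5 ∨ z₁ = 6))) ∧
    (sFresh → (z₁ = (fPlan xv yv).1 ∧ z₂ = (fPlan xv yv).2) ∨
      (z₁ = (fPlan xv yv).2 ∧ z₂ = (fPlan xv yv).1))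

/-- An untouched `F`-half occurs only after the `S`-half was touched, since Client commits at the
first offer inside a gadget. -/
def FHalf.Ok (xv yv sFresh : Bool) : FHalf → Prop
  | .fresh => sFresh = false
  | .touched o w =>
    4 ≤ w.val ∧ o ≠ w ∧ ∃ t : Fin 8, 4 ≤ t.val ∧ t ≠ w ∧ FDoneOk xv yv sFresh o t
  | .done z₁ z₂ => FDoneOk xv yv sFresh z₁ z₂

def Gadget.Ok : Gadget → Prop
  | .pending => True
  | .committed xv yv s f => s.Ok xv ∧ f.Ok xv yv s.isFresh

instance (xv : Bool) (s : SHalf) : Decidable (s.Ok xv) := by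
  cases s <;> unfold SHalf.Ok <;> infer_instance

instance (xv yv sFresh : Bool) (z₁ z₂ : Fin 8) :
    Decidable (FDoneOk xv yv sFresh z₁ z₂) := by
  unfold FDoneOk; infer_instance

instance (xv yv sFresh : Bool) (f : FHalf) : Decidable (f.Ok xv yv sFresh) := by
  cases f <;> unfold FHalf.Ok <;> infer_instance

section Position

variable {n : ℕ} {φ : CNF3 (Fin n ⊕ Fin n)}

def freeSet (st : Fin n → Gadget) : Finset (GVert n) :=
  Finset.univ.filter fun v => (st v.1).mark v.2 = .free

def clientSet (st : Fin n → Gadget) : Finset (GVert n) :=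
  Finset.univ.filter fun v => (st v.1).mark v.2 = .client

def pendingSet (st : Fin n → Gadget) : Finset (Fin n) :=
  Finset.univ.filter fun i => st i = .pending

/-- The gadget records `st` are consistent, and the simulated Paired SAT position is still won by
Falsifier. -/
def Good (φ : CNF3 (Fin n ⊕ Fin n)) (st : Fin n → Gadget) : Prop :=
  (∀ i, (st i).Ok) ∧ PSFalsWins (fun X Y => evalCNF (Sum.elim X Y) φ) (pendingSet st)
    (Gadget.xVal ∘ st) (Gadget.yVal ∘ st)

@[simp] theorem mem_freeSet {st : Fin n → Gadget} {i : Fin n} {k : Fin 8} :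
    (i, k) ∈ freeSet st ↔ (st i).mark k = .free := by
  simp [freeSet]

@[simp] theorem mem_clientSet {st : Fin n → Gadget} {i : Fin n} {k : Fin 8} :
    (i, k) ∈ clientSet st ↔ (st i).mark k = .client := by
  simp [clientSet]

variable {st : Fin n → Gadget} {i : Fin n} {t t' : Fin 8} {s : Gadget}

def Gadget.IsMove (r : Gadget) (t t' : Fin 8) (s : Gadget) : Prop :=
  ∀ k, s.mark k = if k = t then .client else if k = t' then .waiter else r.mark k

theorem freeSet_update (hs : (st i).IsMove t t' s) :
    freeSet (Function.update st i s) = freeSet st \ {(i, t), (i, t')} := by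
  ext ⟨i', k⟩
  rcases eq_or_ne i' i with rfl | hi
  · simp only [mem_freeSet, Function.update_self, hs k, Finset.mem_sdiff, Finset.mem_insert,
      Finset.mem_singleton, Prod.mk.injEq, true_and]
    split_ifs <;> simp_all
  · simp [hi]

theorem clientSet_update (hs : (st i).IsMove t t' s) (ht' : (st i).mark t' = .free) :
    clientSet (Function.update st i s) = insert (i, t) (clientSet st) := by
  ext ⟨i', k⟩
  rcases eq_or_ne i' i with rfl | hi
  · simp only [mem_clientSet, Function.update_self, hs k, Finset.mem_insert, Prod.mk.injEq,
      true_and]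
    split_ifs <;> simp_all
  · simp [hi]

theorem pendingSet_update_committed {xv yv : Bool} {s' : SHalf} {f' : FHalf} :
    pendingSet (Function.update st i (.committed xv yv s' f')) = (pendingSet st).erase i := by
  ext i'
  rcases eq_or_ne i' i with rfl | hi <;> simp [pendingSet, *]

theorem forall_ok_update (h : Good φ st) (hs : s.Ok) : ∀ i', (Function.update st i s i').Ok :=
  (Function.forall_update_iff st fun _ r => r.Ok).mpr ⟨hs, fun i' _ => h.1 i'⟩

theorem Good.update_committed (h : Good φ st) {xv yv : Bool} {s₀ s' : SHalf} {f₀ f' : FHalf}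
    (hi : st i = .committed xv yv s₀ f₀) (hok : (Gadget.committed xv yv s' f').Ok) :
    Good φ (Function.update st i (.committed xv yv s' f')) := by
  refine ⟨forall_ok_update h hok, ?_⟩
  rw [pendingSet_update_committed, Finset.erase_eq_of_notMem (by simp [pendingSet, hi]),
    Function.comp_update, Function.comp_update,
    Function.update_eq_self_iff.mpr (by simp [hi, Gadget.xVal]),
    Function.update_eq_self_iff.mpr (by simp [hi, Gadget.yVal])]
  exact h.2

/-- When Client's strategy commits a pending gadget to the value `xv` of `xᵢ`, Falsifier's
winning strategy supplies the value `yv` of `yᵢ`. -/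
theorem Good.commit (h : Good φ st) (hi : st i = .pending) (xv : Bool) :
    ∃ yv, ∀ s f, (Gadget.committed xv yv s f).Ok →
      Good φ (Function.update st i (.committed xv yv s f)) := by
  have hmem : i ∈ pendingSet st := by simp [pendingSet, hi]
  have hps := h.2
  rw [PSFalsWins, dif_pos ⟨i, hmem⟩] at hps
  have key : ∀ yv, PSFalsWins (fun X Y => evalCNF (Sum.elim X Y) φ) ((pendingSet st).erase i)
      (Function.update (Gadget.xVal ∘ st) i xv) (Function.update (Gadget.yVal ∘ st) i yv) →
      ∀ s f, (Gadget.committed xv yv s f).Ok →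
        Good φ (Function.update st i (.committed xv yv s f)) := by
    intro yv hyv s f hok
    refine ⟨forall_ok_update h hok, ?_⟩
    rw [pendingSet_update_committed, Function.comp_update, Function.comp_update]
    exact hyv
  rcases hps i hmem xv with hyv | hyv
  exacts [⟨true, key true hyv⟩, ⟨false, key false hyv⟩]

end Position

section Moves

variable {xv yv : Bool} {s s' : SHalf} {f f' : FHalf} {t t' k : Fin 8}

def SHalf.IsMove (xv : Bool) (s : SHalf) (t t' : Fin 8) (s' : SHalf) : Prop :=
  t.val < 4 ∧ t'.val < 4 ∧ ∀ k : Fin 8, k.val < 4 →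
    s'.mark xv k = if k = t then .client else if k = t' then .waiter else s.mark xv k

def FHalf.IsMove (f : FHalf) (t t' : Fin 8) (f' : FHalf) : Prop :=
  4 ≤ t.val ∧ 4 ≤ t'.val ∧ ∀ k : Fin 8, 4 ≤ k.val →
    f'.mark k = if k = t then .client else if k = t' then .waiter else f.mark k

instance : Decidable (s.IsMove xv t t' s') := by
  unfold SHalf.IsMove; infer_instance

instance : Decidable (f.IsMove t t' f') := by
  unfold FHalf.IsMove; infer_instance

theorem Gadget.mark_committed_of_lt (hk : k.val < 4) :
    (Gadget.committed xv yv s f).mark k = s.mark xv k := by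
  simp [Gadget.mark, hk]

theorem Gadget.mark_committed_of_le (hk : 4 ≤ k.val) :
    (Gadget.committed xv yv s f).mark k = f.mark k := by
  simp [Gadget.mark, show ¬ k.val < 4 by omega]

theorem Gadget.isMove_pending_iff {r : Gadget} :
    Gadget.pending.IsMove t t' r ↔ (Gadget.committed xv yv .fresh .fresh).IsMove t t' r := by
  have : Gadget.pending.mark = (Gadget.committed xv yv .fresh .fresh).mark := by
    funext k
    simp [Gadget.mark, SHalf.mark, FHalf.mark]
  simp only [Gadget.IsMove, this]

theorem Gadget.isMove_of_sHalf (h : s.IsMove xv t t' s') :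
    (Gadget.committed xv yv s f).IsMove t t' (.committed xv yv s' f) := by
  obtain ⟨ht, ht', h⟩ := h
  intro k
  by_cases hk : k.val < 4
  · simp only [Gadget.mark_committed_of_lt hk, h k hk]
  · have hkt : k ≠ t := by rintro rfl; exact hk ht
    have hkt' : k ≠ t' := by rintro rfl; exact hk ht'
    simp [Gadget.mark, hk, hkt, hkt']

theorem Gadget.isMove_of_fHalf (h : f.IsMove t t' f') :
    (Gadget.committed xv yv s f).IsMove t t' (.committed xv yv s f') := by
  obtain ⟨ht, ht', h⟩ := h
  intro k
  by_cases hk : k.val < 4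
  · have hkt : k ≠ t := by rintro rfl; omega
    have hkt' : k ≠ t' := by rintro rfl; omega
    simp [Gadget.mark, hk, hkt, hkt']
  · simp only [Gadget.mark_committed_of_le (not_lt.mp hk), h k (not_lt.mp hk)]

theorem FDoneOk.relax {b : Bool} {z₁ z₂ : Fin 8} (h : FDoneOk xv yv b z₁ z₂) :
    FDoneOk xv yv false z₁ z₂ :=
  ⟨h.1, h.2.1, h.2.2.1, h.2.2.2.1, by simp⟩

theorem FHalf.Ok.relax {b : Bool} (h : f.Ok xv yv b) : f.Ok xv yv false := by
  cases f with
  | fresh => rfl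
  | touched o w => exact ⟨h.1, h.2.1, h.2.2.imp fun t ht => ⟨ht.1, ht.2.1, ht.2.2.relax⟩⟩
  | done z₁ z₂ => exact FDoneOk.relax h

end Moves

section LocalStrategy

theorem exists_sHalf_start : ∀ j j' : Fin 8, j.val < 4 → j'.val < 4 → j ≠ j' →
    ∃ xv t t', (t = j ∧ t' = j' ∨ t = j' ∧ t' = j) ∧
      SHalf.fresh.IsMove xv t t' (.touched t t') ∧ (SHalf.touched t t').Ok xv := by
  decide

theorem exists_sHalf_punish : ∀ (xv : Bool) (j j' : Fin 8), j.val < 4 → j'.val < 4 →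
    j ≠ j' → (¬ ∃ t t', (t = j ∧ t' = j' ∨ t = j' ∧ t' = j) ∧
      SHalf.fresh.IsMove xv t t' (.touched t t') ∧ (SHalf.touched t t').Ok xv) →
    ∃ σ w₁ w₃ : Fin 8, (σ = j ∨ σ = j') ∧
      (σ = 0 ∧ w₁ = sSpare xv ∨ σ = sSpare xv ∧ w₁ = 0) ∧ w₁.val < 4 ∧ w₃.val < 4 ∧
      w₁ ≠ j ∧ w₁ ≠ j' ∧ w₃ ≠ j ∧ w₃ ≠ j' ∧ w₃ ≠ w₁ := by
  decide

theorem exists_sHalf_finish : ∀ (xv : Bool) (o w j j' : Fin 8), (SHalf.touched o w).Ok xv →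
    j.val < 4 → j'.val < 4 → j ≠ j' → (SHalf.touched o w).mark xv j = .free →
    (SHalf.touched o w).mark xv j' = .free →
    ∃ t t', (t = j ∧ t' = j' ∨ t = j' ∧ t' = j) ∧
      (SHalf.touched o w).IsMove xv t t' .done := by
  decide

/-- Client chooses `xv` so that, whatever value `yv` Falsifier answers, the offer splits the
planned pair `fPlan xv yv`. -/
theorem exists_fHalf_start : ∀ j j' : Fin 8, 4 ≤ j.val → 4 ≤ j'.val → j ≠ j' →
    ∃ xv, ∀ yv, ∃ t t', (t = j ∧ t' = j' ∨ t = j' ∧ t' = j) ∧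
      FHalf.fresh.IsMove t t' (.touched t t') ∧ (FHalf.touched t t').Ok xv yv true := by
  decide

theorem exists_fHalf_start_of_not_isFresh : ∀ (xv yv : Bool) (j j' : Fin 8),
    4 ≤ j.val → 4 ≤ j'.val → j ≠ j' →
    ∃ t t', (t = j ∧ t' = j' ∨ t = j' ∧ t' = j) ∧
      FHalf.fresh.IsMove t t' (.touched t t') ∧ (FHalf.touched t t').Ok xv yv false := by
  decide

set_option synthInstance.maxSize 2000 in
theorem exists_fHalf_finish : ∀ (xv yv b : Bool) (o w j j' : Fin 8),
    (FHalf.touched o w).Ok xv yv b → 4 ≤ j.val → 4 ≤ j'.val → j ≠ j' →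
    (FHalf.touched o w).mark j = .free → (FHalf.touched o w).mark j' = .free →
    ∃ t t', (t = j ∧ t' = j' ∨ t = j' ∧ t' = j) ∧
      (FHalf.touched o w).IsMove t t' (.done o t) ∧ (FHalf.done o t).Ok xv yv b := by
  decide

theorem exists_three_others : ∀ j : Fin 8, ∃ a b c : Fin 8,
    (a.val < 4 ↔ j.val < 4) ∧ (b.val < 4 ↔ j.val < 4) ∧ (c.val < 4 ↔ j.val < 4) ∧
      a ≠ j ∧ b ≠ j ∧ c ≠ j ∧ a ≠ b ∧ a ≠ c ∧ b ≠ c := by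
  decide

theorem sHalf_touched_shape : ∀ (xv : Bool) (o w j : Fin 8), (SHalf.touched o w).Ok xv →
    j.val < 4 → (SHalf.touched o w).mark xv j = .free →
    o.val < 4 ∧ (SHalf.touched o w).mark xv o = .client ∧
      ∃ z : Fin 8, z.val < 4 ∧ z ≠ j ∧ (SHalf.touched o w).mark xv z = .free := by
  decide

set_option synthInstance.maxSize 2000 in
theorem fHalf_touched_shape : ∀ (xv yv b : Bool) (o w j : Fin 8),
    (FHalf.touched o w).Ok xv yv b → 4 ≤ j.val → (FHalf.touched o w).mark j = .free →
    4 ≤ o.val ∧ (FHalf.touched o w).mark o = .client ∧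
      ∃ z : Fin 8, 4 ≤ z.val ∧ z ≠ j ∧ (FHalf.touched o w).mark z = .free := by
  decide

theorem exists_free_of_sHalf_touched : ∀ (xv : Bool) (o w : Fin 8), (SHalf.touched o w).Ok xv →
    ∃ k : Fin 8, k.val < 4 ∧ (SHalf.touched o w).mark xv k = .free := by
  decide

theorem exists_free_of_fHalf_touched : ∀ (xv yv b : Bool) (o w : Fin 8),
    (FHalf.touched o w).Ok xv yv b →
    ∃ k : Fin 8, 4 ≤ k.val ∧ (FHalf.touched o w).mark k = .free := by
  decide

end LocalStrategy

section Shape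

theorem Gadget.Ok.shape_of_free {r : Gadget} (hr : r.Ok) {j : Fin 8} (hj : r.mark j = .free) :
    (∀ k : Fin 8, (k.val < 4 ↔ j.val < 4) → r.mark k = .free) ∨
      ∃ o z : Fin 8, (o.val < 4 ↔ j.val < 4) ∧ (z.val < 4 ↔ j.val < 4) ∧ z ≠ j ∧
        r.mark o = .client ∧ r.mark z = .free := by
  rcases r with _ | ⟨xv, yv, s, f⟩
  · exact .inl fun _ _ => rfl
  by_cases hj4 : j.val < 4
  · rw [Gadget.mark_committed_of_lt hj4] at hj
    cases s with
    | fresh => exact .inl fun k hk => by rw [Gadget.mark_committed_of_lt (hk.mpr hj4)]; rfl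
    | touched o w =>
      obtain ⟨ho, hoC, z, hz, hzj, hzF⟩ := sHalf_touched_shape xv o w j hr.1 hj4 hj
      refine .inr ⟨o, z, iff_of_true ho hj4, iff_of_true hz hj4, hzj, ?_, ?_⟩
      · rwa [Gadget.mark_committed_of_lt ho]
      · rwa [Gadget.mark_committed_of_lt hz]
    | done => simp only [SHalf.mark] at hj; split_ifs at hj
  · rw [Gadget.mark_committed_of_le (by omega)] at hj
    cases f with
    | fresh => exact .inl fun k hk => by rw [Gadget.mark_committed_of_le (by omega)]; rfl
    | touched o w =>
      obtain ⟨ho, hoC, z, hz, hzj, hzF⟩ := fHalf_touched_shape xv yv _ o w j hr.2 (by omega) hj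
      refine .inr ⟨o, z, by omega, by omega, hzj, ?_, ?_⟩
      · rwa [Gadget.mark_committed_of_le ho]
      · rwa [Gadget.mark_committed_of_le hz]
    | done z₁ z₂ => simp only [FHalf.mark] at hj; split_ifs at hj

theorem Gadget.Ok.exists_free_or_done {r : Gadget} (hr : r.Ok) :
    (∃ k, r.mark k = .free) ∨
      ∃ xv yv z₁ z₂, r = .committed xv yv .done (.done z₁ z₂) := by
  rcases r with _ | ⟨xv, yv, s, f⟩
  · exact .inl ⟨0, rfl⟩
  cases s with
  | fresh => exact .inl ⟨0, rfl⟩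
  | touched o w =>
    obtain ⟨k, hk, hkF⟩ := exists_free_of_sHalf_touched xv o w hr.1
    exact .inl ⟨k, by rwa [Gadget.mark_committed_of_lt hk]⟩
  | done =>
    cases f with
    | fresh => exact .inl ⟨4, rfl⟩
    | touched o w =>
      obtain ⟨k, hk, hkF⟩ := exists_free_of_fHalf_touched xv yv _ o w hr.2
      exact .inl ⟨k, by rwa [Gadget.mark_committed_of_le hk]⟩
    | done z₁ z₂ => exact .inr ⟨xv, yv, z₁, z₂, rfl⟩

end Shape

section Strategy

variable {n : ℕ} {φ : CNF3 (Fin n ⊕ Fin n)} {st : Fin n → Gadget}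

def ClientWinsBelow (φ : CNF3 (Fin n ⊕ Fin n)) (st : Fin n → Gadget) : Prop :=
  ∀ st', Good φ st' → (freeSet st').card < (freeSet st).card →
    CWClientWins (gadgetEdges n φ) (freeSet st') (clientSet st')

theorem answers_of_move (ih : ClientWinsBelow φ st) {i : Fin n} {j j' t t' : Fin 8}
    (hj : (st i).mark j = .free) (hj' : (st i).mark j' = .free)
    (hord : t = j ∧ t' = j' ∨ t = j' ∧ t' = j) {s : Gadget} (hs : (st i).IsMove t t' s)
    (hgood : Good φ (Function.update st i s)) :
    CWClientWins.Answers (gadgetEdges n φ) (freeSet st) (clientSet st) (i, j) (i, j') := by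
  obtain ⟨hpair, ht, ht'⟩ : ({(i, j), (i, j')} : Finset (GVert n)) = {(i, t), (i, t')} ∧
      (st i).mark t = .free ∧ (st i).mark t' = .free := by
    rcases hord with ⟨rfl, rfl⟩ | ⟨rfl, rfl⟩
    exacts [⟨rfl, hj, hj'⟩, ⟨Finset.pair_comm _ _, hj', hj⟩]
  refine .of_take (v := (i, t)) (by rcases hord with ⟨rfl, rfl⟩ | ⟨rfl, rfl⟩ <;> simp) ?_
  rw [hpair, ← freeSet_update hs, ← clientSet_update hs ht']
  exact ih _ hgood (by rw [freeSet_update hs]; exact card_sdiff_pair_lt (by simpa using ht))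

/-- Client claims `σ ∈ {sᵢ⁰, sSpare xv}`. With the planned `F`-pair, the edge `punishEdge`,
missing the other vertex `w₁` of that pair and possibly one vertex of `Fᵢ`, and the block edge
`{σ, w₁, w₃}` form a winning threat. -/
theorem answers_of_deviation (hgood : Good φ st) {i : Fin n} {xv yv : Bool} {f : FHalf}
    (hi : st i = .committed xv yv .fresh f) {j j' : Fin 8} (hj4 : j.val < 4) (hj'4 : j'.val < 4)
    (hjj' : j ≠ j')
    (hdev : ¬ ∃ t t', (t = j ∧ t' = j' ∨ t = j' ∧ t' = j) ∧
      SHalf.fresh.IsMove xv t t' (.touched t t') ∧ (SHalf.touched t t').Ok xv) :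
    CWClientWins.Answers (gadgetEdges n φ) (freeSet st) (clientSet st) (i, j) (i, j') := by
  obtain ⟨σ, w₁, w₃, hσ, hσw₁, hw₁, hw₃, hw₁j, hw₁j', hw₃j, hw₃j', hw₃w₁⟩ :=
    exists_sHalf_punish xv j j' hj4 hj'4 hjj' hdev
  refine .of_take (v := (i, σ)) (by rcases hσ with rfl | rfl <;> simp) ?_
  have hfree : ∀ k, (st i).mark k = .free → k ≠ j → k ≠ j' →
      (i, k) ∈ freeSet st \ {(i, j), (i, j')} := by
    intro k hk hkj hkj'
    simp [hk, hkj, hkj']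
  have hSfree : ∀ k : Fin 8, k.val < 4 → (st i).mark k = .free := fun k hk => by
    rw [hi, Gadget.mark_committed_of_lt hk]; rfl
  have hw₁U := hfree w₁ (hSfree w₁ hw₁) hw₁j hw₁j'
  have hσ4 : σ.val < 4 := by rcases hσ with rfl | rfl <;> assumption
  have hσw₃ : σ ≠ w₃ := by rintro rfl; rcases hσ with rfl | rfl <;> contradiction
  have hσw₁' : σ ≠ w₁ := by
    rcases hσw₁ with ⟨rfl, rfl⟩ | ⟨rfl, rfl⟩ <;> cases xv <;> decide
  have hfok : f.Ok xv yv true := by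
    have := hgood.1 i
    rw [hi] at this
    exact this.2
  cases f with
  | fresh => exact absurd hfok (by simp [FHalf.Ok])
  | touched o w =>
    obtain ⟨-, -, t, ht, htw, ho, -, hot, -, hplan⟩ := hfok
    have hoC : (i, o) ∈ clientSet st := by
      simp [hi, Gadget.mark_committed_of_le ho, FHalf.mark]
    have htU := hfree t
      (by rw [hi, Gadget.mark_committed_of_le ht]; simp [FHalf.mark, hot.symm, htw])
      (by rintro rfl; omega) (by rintro rfl; omega)
    refine CWClientWins.of_path (a := (i, w₃)) (b := (i, w₁)) (c := (i, t))
      (triple_mem_gadgetEdges (i := i) hσw₁' hσw₃ hw₃w₁.symm (by omega) (by omega))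
      (punishEdge_mem_gadgetEdges i xv yv) (hfree w₃ (hSfree w₃ hw₃) hw₃j hw₃j') hw₁U
      htU
      (by simpa using hw₃w₁) (by simp; rintro rfl; omega) (by simp; rintro rfl; omega) ?_ ?_
    · simp [Finset.insert_subset_iff]
    · exact punishEdge_subset hσw₁ (hplan rfl) (by simp) (by simp) (by simp [hoC]) (by simp)
  | done z₁ z₂ =>
    obtain ⟨hz₁, hz₂, -, -, hplan⟩ := hfok
    have hzC : ∀ z, (z = z₁ ∨ z = z₂) → 4 ≤ z.val → (i, z) ∈ clientSet st :=
      fun z hz hz4 => by simp [hi, Gadget.mark_committed_of_le hz4, FHalf.mark, hz]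
    refine CWClientWins.of_subset_insert (punishEdge_mem_gadgetEdges i xv yv) hw₁U ?_
    exact punishEdge_subset hσw₁ (hplan rfl) (by simp) (by simp)
      (by simp [hzC z₁ (.inl rfl) hz₁]) (by simp [hzC z₂ (.inr rfl) hz₂])

theorem answers_of_sOffer (hgood : Good φ st) (ih : ClientWinsBelow φ st) {i : Fin n}
    {j j' : Fin 8} (hj : (st i).mark j = .free) (hj' : (st i).mark j' = .free) (hjj' : j ≠ j')
    (hj4 : j.val < 4) (hj'4 : j'.val < 4) :
    CWClientWins.Answers (gadgetEdges n φ) (freeSet st) (clientSet st) (i, j) (i, j') := by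
  cases hi : st i with
  | pending =>
    obtain ⟨xv, t, t', hord, hmove, hsok⟩ := exists_sHalf_start j j' hj4 hj'4 hjj'
    obtain ⟨yv, hgood'⟩ := hgood.commit hi xv
    refine answers_of_move ih hj hj' hord ?_ (hgood' (.touched t t') .fresh ⟨hsok, rfl⟩)
    rw [hi, Gadget.isMove_pending_iff (xv := xv) (yv := yv)]
    exact Gadget.isMove_of_sHalf hmove
  | committed xv yv s f =>
    have hok : (Gadget.committed xv yv s f).Ok := hi ▸ hgood.1 i
    have hjS : s.mark xv j = .free := by rwa [hi, Gadget.mark_committed_of_lt hj4] at hj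
    have hj'S : s.mark xv j' = .free := by rwa [hi, Gadget.mark_committed_of_lt hj'4] at hj'
    cases s with
    | fresh =>
      by_cases hstart : ∃ t t', (t = j ∧ t' = j' ∨ t = j' ∧ t' = j) ∧
          SHalf.fresh.IsMove xv t t' (.touched t t') ∧ (SHalf.touched t t').Ok xv
      · obtain ⟨t, t', hord, hmove, hsok⟩ := hstart
        exact answers_of_move ih hj hj' hord (hi ▸ Gadget.isMove_of_sHalf hmove)
          (hgood.update_committed hi ⟨hsok, hok.2.relax⟩)
      · exact answers_of_deviation hgood hi hj4 hj'4 hjj' hstart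
    | touched o w =>
      obtain ⟨t, t', hord, hmove⟩ :=
        exists_sHalf_finish xv o w j j' hok.1 hj4 hj'4 hjj' hjS hj'S
      exact answers_of_move ih hj hj' hord (hi ▸ Gadget.isMove_of_sHalf hmove)
        (hgood.update_committed (s' := .done) hi ⟨trivial, hok.2.relax⟩)
    | done =>
      simp only [SHalf.mark] at hjS
      split_ifs at hjS

theorem answers_of_fOffer (hgood : Good φ st) (ih : ClientWinsBelow φ st) {i : Fin n}
    {j j' : Fin 8} (hj : (st i).mark j = .free) (hj' : (st i).mark j' = .free) (hjj' : j ≠ j')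
    (hj4 : 4 ≤ j.val) (hj'4 : 4 ≤ j'.val) :
    CWClientWins.Answers (gadgetEdges n φ) (freeSet st) (clientSet st) (i, j) (i, j') := by
  cases hi : st i with
  | pending =>
    obtain ⟨xv, hxv⟩ := exists_fHalf_start j j' hj4 hj'4 hjj'
    obtain ⟨yv, hgood'⟩ := hgood.commit hi xv
    obtain ⟨t, t', hord, hmove, hfok⟩ := hxv yv
    refine answers_of_move ih hj hj' hord ?_ (hgood' .fresh (.touched t t') ⟨trivial, hfok⟩)
    rw [hi, Gadget.isMove_pending_iff (xv := xv) (yv := yv)]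
    exact Gadget.isMove_of_fHalf hmove
  | committed xv yv s f =>
    have hok : (Gadget.committed xv yv s f).Ok := hi ▸ hgood.1 i
    have hjF : f.mark j = .free := by rwa [hi, Gadget.mark_committed_of_le hj4] at hj
    have hj'F : f.mark j' = .free := by rwa [hi, Gadget.mark_committed_of_le hj'4] at hj'
    cases f with
    | fresh =>
      obtain ⟨t, t', hord, hmove, hfok⟩ :=
        exists_fHalf_start_of_not_isFresh xv yv j j' hj4 hj'4 hjj'
      exact answers_of_move ih hj hj' hord (hi ▸ Gadget.isMove_of_fHalf hmove)
        (hgood.update_committed hi ⟨hok.1, hok.2 ▸ hfok⟩)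
    | touched o w =>
      obtain ⟨t, t', hord, hmove, hfok⟩ :=
        exists_fHalf_finish xv yv _ o w j j' hok.2 hj4 hj'4 hjj' hjF hj'F
      exact answers_of_move ih hj hj' hord (hi ▸ Gadget.isMove_of_fHalf hmove)
        (hgood.update_committed hi ⟨hok.1, hfok⟩)
    | done z₁ z₂ =>
      simp only [FHalf.mark] at hjF
      split_ifs at hjF

/-- An offer that leaves a half-gadget uneven lets Client take three of its four vertices. -/
theorem answers_of_cross (hgood : Good φ st) {x y : GVert n} (hx : x ∈ freeSet st)
    (hsep : ¬ (y.1 = x.1 ∧ (y.2.val < 4 ↔ x.2.val < 4))) :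
    CWClientWins.Answers (gadgetEdges n φ) (freeSet st) (clientSet st) x y := by
  obtain ⟨i, j⟩ := x
  rw [mem_freeSet] at hx
  refine .of_take (.inl rfl) ?_
  have hmem : ∀ k : Fin 8, (k.val < 4 ↔ j.val < 4) → k ≠ j → (st i).mark k = .free →
      (i, k) ∈ freeSet st \ {(i, j), y} := by
    intro k hk hkj hkF
    simp only [Finset.mem_sdiff, mem_freeSet, hkF, Finset.mem_insert, Finset.mem_singleton,
      Prod.mk.injEq, true_and, hkj, false_or, true_and]
    rintro rfl
    exact hsep ⟨rfl, hk⟩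
  rcases (hgood.1 i).shape_of_free hx with hfresh | ⟨o, z, ho, hz, hzj, hoC, hzF⟩
  · obtain ⟨a, b, c, ha, hb, hc, haj, hbj, hcj, hab, hac, hbc⟩ := exists_three_others j
    exact CWClientWins.of_path (triple_mem_gadgetEdges (i := i) haj.symm hbj.symm hab ha hb)
      (triple_mem_gadgetEdges (i := i) hbj.symm hcj.symm hbc hb hc)
      (hmem a ha haj (hfresh a ha))
      (hmem b hb hbj (hfresh b hb)) (hmem c hc hcj (hfresh c hc)) (by simpa) (by simpa)
      (by simpa) (by simp [Finset.insert_subset_iff]) (by simp [Finset.insert_subset_iff])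
  · have hoj : o ≠ j := by rintro rfl; rw [hoC] at hx; cases hx
    have hoz : o ≠ z := by rintro rfl; rw [hoC] at hzF; cases hzF
    exact CWClientWins.of_subset_insert
      (triple_mem_gadgetEdges (i := i) hoj.symm hzj.symm hoz ho hz)
      (hmem z hz hzj hzF) (by simp [Finset.insert_subset_iff, hoC])

theorem exists_litSets_subset (hgood : Good φ st)
    (hdone : ∀ i, ∃ xv yv z₁ z₂, st i = .committed xv yv .done (.done z₁ z₂))
    {l : Lit (Fin n ⊕ Fin n)}
    (hl : ¬ evalLit (Sum.elim (Gadget.xVal ∘ st) (Gadget.yVal ∘ st)) l) :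
    ∃ h ∈ litSets l, h ⊆ clientSet st := by
  obtain ⟨v | v, pol⟩ := l <;> obtain ⟨xv, yv, z₁, z₂, hi⟩ := hdone v <;>
    simp only [evalLit, Sum.elim_inl, Sum.elim_inr, Function.comp_apply, hi, Gadget.xVal,
      Gadget.yVal] at hl
  · cases pol <;> simp only [Bool.not_eq_false, Bool.not_eq_true] at hl <;> subst hl
    · exact ⟨{vs0 v, vsF v}, rfl, by simp [Finset.insert_subset_iff, vs0, vsF, hi, Gadget.mark,
        SHalf.mark, sClaim]⟩
    · exact ⟨{vs0 v, vsT v}, rfl, by simp [Finset.insert_subset_iff, vs0, vsT, hi, Gadget.mark,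
        SHalf.mark, sClaim]⟩
  · obtain ⟨hz₁, hz₂, -, hy, -⟩ : FDoneOk xv yv false z₁ z₂ := by
      have := hgood.1 v
      rw [hi] at this
      exact this.2
    have hC : ∀ k, k = z₁ ∨ k = z₂ → (v, k) ∈ clientSet st := by
      rintro k hk
      have : 4 ≤ k.val := by rcases hk with rfl | rfl <;> assumption
      simp [hi, Gadget.mark_committed_of_le this, FHalf.mark, hk]
    cases pol <;> simp only [Bool.not_eq_false, Bool.not_eq_true] at hl <;> subst hl <;>
      simp only [Bool.false_eq_true, if_true, if_false] at hy
    · exact ⟨{vfF v}, by simp [litSets], by simpa [vfF] using hC 7 (by tauto)⟩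
    · rcases hy with ⟨h4, h5 | h6⟩ | ⟨h4, h5 | h6⟩
      · exact ⟨{vf0 v, vfT v}, by simp [litSets], by
          simp [Finset.insert_subset_iff, vf0, vfT, hC 4 (.inl h4.symm), hC 5 (.inr h5.symm)]⟩
      · exact ⟨{vf0 v, vfT' v}, by simp [litSets], by
          simp [Finset.insert_subset_iff, vf0, vfT', hC 4 (.inl h4.symm), hC 6 (.inr h6.symm)]⟩
      · exact ⟨{vf0 v, vfT v}, by simp [litSets], by
          simp [Finset.insert_subset_iff, vf0, vfT, hC 4 (.inr h4.symm), hC 5 (.inl h5.symm)]⟩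
      · exact ⟨{vf0 v, vfT' v}, by simp [litSets], by
          simp [Finset.insert_subset_iff, vf0, vfT', hC 4 (.inr h4.symm), hC 6 (.inl h6.symm)]⟩

/-- With fewer than two free vertices every gadget is finished, so Client's vertices encode the
final assignment of the simulated game, which falsifies some clause `C_j`; the corresponding
edge of `Cl` is Client's. -/
theorem Good.exists_edge (hgood : Good φ st) (hcard : ¬ 2 ≤ (freeSet st).card) :
    ∃ e ∈ gadgetEdges n φ, e ⊆ clientSet st ∪ freeSet st := by
  have hdone : ∀ i, ∃ xv yv z₁ z₂, st i = .committed xv yv .done (.done z₁ z₂) := by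
    intro i
    refine (hgood.1 i).exists_free_or_done.resolve_left ?_
    rintro ⟨j, hj⟩
    obtain ⟨k, hkj, hk⟩ : ∃ k, k ≠ j ∧ (st i).mark k = .free := by
      rcases (hgood.1 i).shape_of_free hj with h | ⟨-, z, -, -, hzj, -, hzF⟩
      · obtain ⟨a, -, -, ha, -, -, haj, -⟩ := exists_three_others j
        exact ⟨a, haj, h a ha⟩
      · exact ⟨z, hzj, hzF⟩
    exact hcard (Finset.one_lt_card.mpr ⟨(i, k), by simpa, (i, j), by simpa, by simpa⟩)
  have hps := hgood.2
  have hR : pendingSet st = ∅ := by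
    ext i
    obtain ⟨_, _, _, _, hi⟩ := hdone i
    simp [pendingSet, hi]
  rw [hR, PSFalsWins, dif_neg (by simp)] at hps
  obtain ⟨c, hc, hfalse⟩ := not_forall₂.mp hps
  simp only [evalClause, not_or] at hfalse
  obtain ⟨h₁, hm₁, hs₁⟩ := exists_litSets_subset hgood hdone hfalse.1
  obtain ⟨h₂, hm₂, hs₂⟩ := exists_litSets_subset hgood hdone hfalse.2.1
  obtain ⟨h₃, hm₃, hs₃⟩ := exists_litSets_subset hgood hdone hfalse.2.2
  refine ⟨h₁ ∪ h₂ ∪ h₃, .inr ⟨c, hc, h₁, hm₁, h₂, hm₂, h₃, hm₃, rfl⟩, ?_⟩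
  exact (Finset.union_subset (Finset.union_subset hs₁ hs₂) hs₃).trans Finset.subset_union_left

theorem Good.clientWins (hgood : Good φ st) :
    CWClientWins (gadgetEdges n φ) (freeSet st) (clientSet st) := by
  induction hN : (freeSet st).card using Nat.strong_induction_on generalizing st with
  | _ N ih =>
  have ih' : ClientWinsBelow φ st := fun st' h' hlt => ih _ (hN ▸ hlt) h' rfl
  rw [CWClientWins]
  split_ifs with h2
  · rintro ⟨i, j⟩ hx ⟨i', j'⟩ hy hxy
    by_cases hsame : i' = i ∧ (j'.val < 4 ↔ j.val < 4)
    · obtain ⟨rfl, hh⟩ := hsame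
      rw [mem_freeSet] at hx hy
      have hjj' : j ≠ j' := by rintro rfl; exact hxy rfl
      by_cases hj4 : j.val < 4
      · exact answers_of_sOffer hgood ih' hx hy hjj' hj4 (hh.mpr hj4)
      · exact answers_of_fOffer hgood ih' hx hy hjj' (by omega) (by omega)
    · exact answers_of_cross hgood hx hsame
  · exact hgood.exists_edge h2

end Strategy

/-- If Falsifier has a winning strategy in the Paired SAT game on `(φ, X)` with
`X = {(x₁, y₁), …, (xₙ, yₙ)}`, then Client has a winning strategy in the Client-Waiter game on
the associated gadget hypergraph. -/
theorem pairedSAT_falsifier_to_client (n : ℕ) (φ : CNF3 (Fin n ⊕ Fin n))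
    (hfals : PSFalsWins (fun X Y => evalCNF (Sum.elim X Y) φ) Finset.univ
      (fun _ => false) (fun _ => false)) :
    CWClientWins (gadgetEdges n φ) (Finset.univ : Finset (GVert n)) ∅ := by
  have hgood : Good φ fun _ => .pending := ⟨fun _ => trivial, by
    simpa [pendingSet, Function.comp_def, Gadget.xVal, Gadget.yVal] using hfals⟩
  simpa [freeSet, clientSet, Gadget.mark] using hgood.clientWins
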